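/- Fix c > 0, n, d ∈ ℕ and positive reals s_{1j}, s_{2j} for j = 1,…,d, and let β = Γ(3/c)/Γ(1/c). The system of equations −n/(σ_{lj}+σ_{rj}) + c·β^{c/2}·σ_{lj}^{−c−1}·s_{1j} = 0 and −n/(σ_{lj}+σ_{rj}) + c·β^{c/2}·σ_{rj}^{−c−1}·s_{2j} = 0 in positive unknowns σ_{lj}, σ_{rj} has the unique positive solution σ̂_{lj}^c = (c/n)·β^{c/2}·s_{1j}^{c/(c+1)}·(s_{1j}^{1/(c+1)} + s_{2j}^{1/(c+1)}) and σ̂_{rj}^c = (c/n)·β^{c/2}·s_{2j}^{c/(c+1)}·(s_{1j}^{1/(c+1)} + s_{2j}^{1/(c+1)}). -/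

import Mathlib

open Real

/-! For positive `x`, the stationarity condition `-n / (x + y) + K x^(-c-1) a = 0` is the equation
`n x^(c+1) = K a (x + y)`. Dividing the two equations gives `a y^(c+1) = b x^(c+1)`, so a positive
solution lies on the ray `t ↦ (a^(1/(c+1)) t, b^(1/(c+1)) t)`, along which both equations reduce
to `n t^c = K (a^(1/(c+1)) + b^(1/(c+1)))`. This pins down `t^c`, hence `x^c = a^(c/(c+1)) t^c`
and `y^c = b^(c/(c+1)) t^c`; conversely the point of the ray with this value of `t^c` solves the
system. Here `K = c β^(c/2)`, and `β > 0` because both Gamma values are. -/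

section Stationarity

variable {n K a b c s t x y : ℝ}

theorem neg_div_add_mul_rpow_eq_zero_iff (hx : 0 < x) (hs : s ≠ 0) :
    -n / s + K * x ^ (-c - 1) * a = 0 ↔ n * x ^ (c + 1) = K * a * s := by
  have hxp : x ^ (c + 1) ≠ 0 := (rpow_pos_of_pos hx _).ne'
  rw [show -c - 1 = -(c + 1) by ring, rpow_neg hx.le]
  constructor <;> intro h
  · field_simp at h; linarith
  · field_simp; linarith

theorem rpow_root_mul_rpow_add_one (ha : 0 < a) (ht : 0 < t) (hc : c + 1 ≠ 0) :
    (a ^ (1 / (c + 1)) * t) ^ (c + 1) = a * t ^ c * t := by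
  rw [mul_rpow (rpow_nonneg ha.le _) ht.le, ← rpow_mul ha.le, one_div_mul_cancel hc, rpow_one,
    rpow_add ht, rpow_one, mul_assoc]

theorem stationary_along_ray_iff (ha : 0 < a) (ht : 0 < t) (hc : c + 1 ≠ 0) (S : ℝ) :
    n * (a ^ (1 / (c + 1)) * t) ^ (c + 1) = K * a * (S * t) ↔ n * t ^ c = K * S := by
  rw [rpow_root_mul_rpow_add_one ha ht hc]
  constructor <;> intro h
  · have : (n * t ^ c) * (a * t) = (K * S) * (a * t) := by linear_combination h
    exact mul_right_cancel₀ (by positivity) this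
  · linear_combination a * t * h

theorem div_rpow_root_eq_of_mul_rpow_eq (ha : 0 < a) (hb : 0 < b) (hx : 0 < x) (hy : 0 < y)
    (hc : c + 1 ≠ 0) (h : a * y ^ (c + 1) = b * x ^ (c + 1)) :
    y / b ^ (1 / (c + 1)) = x / a ^ (1 / (c + 1)) := by
  refine rpow_left_injOn hc (div_nonneg hy.le (rpow_nonneg hb.le _))
    (div_nonneg hx.le (rpow_nonneg ha.le _)) ?_
  simp only [div_rpow hy.le (rpow_nonneg hb.le _), div_rpow hx.le (rpow_nonneg ha.le _),
    ← rpow_mul hb.le, ← rpow_mul ha.le, one_div_mul_cancel hc, rpow_one]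
  rw [div_eq_div_iff hb.ne' ha.ne']
  linear_combination h

theorem rpow_eq_of_stationary (hn : n ≠ 0) (hc : c + 1 ≠ 0) (ha : 0 < a) (hb : 0 < b)
    (hx : 0 < x) (hy : 0 < y) (h₁ : n * x ^ (c + 1) = K * a * (x + y))
    (h₂ : n * y ^ (c + 1) = K * b * (x + y)) :
    x ^ c = a ^ (c / (c + 1)) * (K / n * (a ^ (1 / (c + 1)) + b ^ (1 / (c + 1)))) ∧
      y ^ c = b ^ (c / (c + 1)) * (K / n * (a ^ (1 / (c + 1)) + b ^ (1 / (c + 1)))) := by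
  have hab : a * y ^ (c + 1) = b * x ^ (c + 1) :=
    mul_left_cancel₀ hn (by linear_combination a * h₂ - b * h₁)
  obtain ⟨t, ht_def⟩ : ∃ t, x / a ^ (1 / (c + 1)) = t := ⟨_, rfl⟩
  have ht : 0 < t := ht_def ▸ by positivity
  have hxt : x = a ^ (1 / (c + 1)) * t := by rw [← ht_def, mul_div_cancel₀ _ (by positivity)]
  have hyt : y = b ^ (1 / (c + 1)) * t := by
    rw [← ht_def, ← div_rpow_root_eq_of_mul_rpow_eq ha hb hx hy hc hab,
      mul_div_cancel₀ _ (by positivity)]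
  have hsum : x + y = (a ^ (1 / (c + 1)) + b ^ (1 / (c + 1))) * t := by rw [hxt, hyt]; ring
  rw [hsum, hxt, stationary_along_ray_iff ha ht hc] at h₁
  have htc : t ^ c = K / n * (a ^ (1 / (c + 1)) + b ^ (1 / (c + 1))) := by
    rw [div_mul_eq_mul_div, eq_div_iff hn]
    linear_combination h₁
  have hroot (u : ℝ) (hu : 0 < u) : (u ^ (1 / (c + 1)) * t) ^ c = u ^ (c / (c + 1)) * t ^ c := by
    rw [mul_rpow (rpow_nonneg hu.le _) ht.le, ← rpow_mul hu.le, one_div_mul_eq_div]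
  rw [← htc, hxt, hyt]
  exact ⟨hroot a ha, hroot b hb⟩

theorem stationary_of_rpow_eq (hn : n ≠ 0) (hc : c ≠ 0) (hc1 : c + 1 ≠ 0) (ha : 0 < a)
    (hb : 0 < b) (hx : 0 < x) (hy : 0 < y)
    (hM : 0 < K / n * (a ^ (1 / (c + 1)) + b ^ (1 / (c + 1))))
    (hxc : x ^ c = a ^ (c / (c + 1)) * (K / n * (a ^ (1 / (c + 1)) + b ^ (1 / (c + 1)))))
    (hyc : y ^ c = b ^ (c / (c + 1)) * (K / n * (a ^ (1 / (c + 1)) + b ^ (1 / (c + 1))))) :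
    n * x ^ (c + 1) = K * a * (x + y) ∧ n * y ^ (c + 1) = K * b * (x + y) := by
  obtain ⟨M, hM_def⟩ : ∃ M, K / n * (a ^ (1 / (c + 1)) + b ^ (1 / (c + 1))) = M := ⟨_, rfl⟩
  rw [hM_def] at hM hxc hyc
  have hroot (u z : ℝ) (hu : 0 < u) (hz : 0 < z) (hzc : z ^ c = u ^ (c / (c + 1)) * M) :
      z = u ^ (1 / (c + 1)) * M ^ (1 / c) := by
    rw [← rpow_rpow_inv hz.le hc, hzc, mul_rpow (rpow_nonneg hu.le _) hM.le, ← rpow_mul hu.le,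
      one_div c, show c / (c + 1) * c⁻¹ = 1 / (c + 1) by field_simp]
  have hMc : n * (M ^ (1 / c)) ^ c = K * (a ^ (1 / (c + 1)) + b ^ (1 / (c + 1))) := by
    rw [one_div, rpow_inv_rpow hM.le hc, ← hM_def]
    field_simp
  have hsum : x + y = (a ^ (1 / (c + 1)) + b ^ (1 / (c + 1))) * M ^ (1 / c) := by
    rw [hroot a x ha hx hxc, hroot b y hb hy hyc]; ring
  rw [hsum, hroot a x ha hx hxc, hroot b y hb hy hyc]
  have ht : 0 < M ^ (1 / c) := rpow_pos_of_pos hM _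
  exact ⟨(stationary_along_ray_iff ha ht hc1 _).mpr hMc,
    (stationary_along_ray_iff hb ht hc1 _).mpr hMc⟩

end Stationarity

theorem sgg_scale_mle_unique (n d : ℕ) (hn : 0 < n) (c : ℝ) (hc : 0 < c)
    (s1 s2 : Fin d → ℝ) (hs1 : ∀ j, 0 < s1 j) (hs2 : ∀ j, 0 < s2 j)
    (β : ℝ) (hβ : β = Real.Gamma (3 / c) / Real.Gamma (1 / c)) (j : Fin d)
    (Sl Sr : ℝ)
    (hSl : Sl = (c / n) * β ^ (c / 2) * s1 j ^ (c / (c + 1)) *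
        (s1 j ^ (1 / (c + 1)) + s2 j ^ (1 / (c + 1))))
    (hSr : Sr = (c / n) * β ^ (c / 2) * s2 j ^ (c / (c + 1)) *
        (s1 j ^ (1 / (c + 1)) + s2 j ^ (1 / (c + 1)))) :
    (-(n : ℝ) / (Sl ^ (1 / c) + Sr ^ (1 / c))
        + c * β ^ (c / 2) * (Sl ^ (1 / c)) ^ (-c - 1) * s1 j = 0 ∧
      -(n : ℝ) / (Sl ^ (1 / c) + Sr ^ (1 / c))
        + c * β ^ (c / 2) * (Sr ^ (1 / c)) ^ (-c - 1) * s2 j = 0) ∧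
    (∀ σl σr : ℝ, 0 < σl → 0 < σr →
      (-(n : ℝ) / (σl + σr) + c * β ^ (c / 2) * σl ^ (-c - 1) * s1 j = 0) →
      (-(n : ℝ) / (σl + σr) + c * β ^ (c / 2) * σr ^ (-c - 1) * s2 j = 0) →
      σl ^ c = Sl ∧ σr ^ c = Sr) := by
  have hn' : (0 : ℝ) < n := Nat.cast_pos.mpr hn
  have hβ' : 0 < β :=
    hβ ▸ div_pos (Gamma_pos_of_pos (by positivity)) (Gamma_pos_of_pos (by positivity))
  have ha := hs1 j
  have hb := hs2 j
  have hM : 0 < c * β ^ (c / 2) / n * (s1 j ^ (1 / (c + 1)) + s2 j ^ (1 / (c + 1))) := by positivity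
  have hSl' : Sl = s1 j ^ (c / (c + 1)) *
      (c * β ^ (c / 2) / n * (s1 j ^ (1 / (c + 1)) + s2 j ^ (1 / (c + 1)))) := by rw [hSl]; ring
  have hSr' : Sr = s2 j ^ (c / (c + 1)) *
      (c * β ^ (c / 2) / n * (s1 j ^ (1 / (c + 1)) + s2 j ^ (1 / (c + 1)))) := by rw [hSr]; ring
  have hc1 : c + 1 ≠ 0 := by positivity
  refine ⟨?_, fun σl σr hl hr h₁ h₂ => ?_⟩
  · have hroot (S : ℝ) (hS : 0 < S) : (S ^ (1 / c)) ^ c = S := by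
      rw [one_div, rpow_inv_rpow hS.le hc.ne']
    have hSl_pos : 0 < Sl := hSl' ▸ by positivity
    have hSr_pos : 0 < Sr := hSr' ▸ by positivity
    obtain ⟨h₁, h₂⟩ := stationary_of_rpow_eq hn'.ne' hc.ne' hc1 ha hb (by positivity)
      (by positivity) hM ((hroot Sl hSl_pos).trans hSl') ((hroot Sr hSr_pos).trans hSr')
    rw [neg_div_add_mul_rpow_eq_zero_iff (by positivity) (by positivity),
      neg_div_add_mul_rpow_eq_zero_iff (by positivity) (by positivity)]
    exact ⟨h₁, h₂⟩
  · rw [neg_div_add_mul_rpow_eq_zero_iff hl (by positivity)] at h₁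
    rw [neg_div_add_mul_rpow_eq_zero_iff hr (by positivity)] at h₂
    rw [hSl', hSr']
    exact rpow_eq_of_stationary hn'.ne' hc1 ha hb hl hr h₁ h₂
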